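/- Let F_2 be the free group on x_1, x_2. In the reduced free group RF_2 (quotient of F_2 by all relations [x_i, w^{-1} x_i w] = 1), the image of the commutator [x_1, x_2] is central, and RF_2 is nilpotent of class exactly 2 (i.e., [x_1,x_2] ≠ 1 in RF_2 but all triple commutators vanish). -/

import Mathlib

/-- The set of relators `[x_i, w⁻¹ x_i w]` (with `[a,b] = a⁻¹b⁻¹ab`) in the free group. -/
def redRelators (n : ℕ) : Set (FreeGroup (Fin n)) :=
  {r | ∃ (i : Fin n) (w : FreeGroup (Fin n)),
    r = (FreeGroup.of i)⁻¹ * (w⁻¹ * FreeGroup.of i * w)⁻¹ *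
        FreeGroup.of i * (w⁻¹ * FreeGroup.of i * w)}

/-- The reduced free group `RF_n`. -/
def RF (n : ℕ) := FreeGroup (Fin n) ⧸ Subgroup.normalClosure (redRelators n)

instance (n : ℕ) : Group (RF n) := by unfold RF; infer_instance

/-!
Every generator of `RF_2` commutes with its conjugates, so `[x₁,x₂] = x₁⁻¹ (x₂⁻¹ x₁ x₂)` commutes
with `x₁` and `[x₁,x₂] = (x₁⁻¹ x₂ x₁)⁻¹ x₂` commutes with `x₂`: it is central. Then the images of
the generators commute modulo the centre, so `RF_2` modulo its centre is abelian and the class is at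
most `2`. The dihedral group of order `8` has class `2`, hence satisfies the defining relations,
and there the commutator of a rotation and a reflection is `r²`, so `[x₁,x₂] ≠ 1`.
-/

open Subgroup

section GroupTheory

variable {G : Type*} [Group G]

theorem inv_mul_inv_mul_mul_eq_one_iff {x y : G} : x⁻¹ * y⁻¹ * x * y = 1 ↔ Commute x y := by
  rw [show x⁻¹ * y⁻¹ * x * y = (y * x)⁻¹ * (x * y) by group, inv_mul_eq_one, eq_comm]
  rfl

theorem commute_inv_mul_inv_mul_mul_left {x y : G} (h : Commute x (y⁻¹ * x * y)) :
    Commute x (x⁻¹ * y⁻¹ * x * y) := by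
  rw [show x⁻¹ * y⁻¹ * x * y = x⁻¹ * (y⁻¹ * x * y) by group]
  exact (Commute.refl x).inv_right.mul_right h

theorem commute_inv_mul_inv_mul_mul_right {x y : G} (h : Commute y (x⁻¹ * y * x)) :
    Commute y (x⁻¹ * y⁻¹ * x * y) := by
  rw [show x⁻¹ * y⁻¹ * x * y = (x⁻¹ * y * x)⁻¹ * y by group]
  exact h.inv_right.mul_right (Commute.refl y)

theorem Subgroup.mem_center_of_closure_eq_top {S : Set G} (hS : closure S = ⊤) {c : G}
    (hc : ∀ s ∈ S, Commute s c) : c ∈ center G := by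
  rw [← centralizer_univ, ← coe_top, ← hS, centralizer_closure, mem_centralizer_iff]
  exact hc

theorem Subgroup.center_eq_top_of_closure_eq_top {S : Set G} (hS : closure S = ⊤)
    (hcomm : ∀ s ∈ S, ∀ t ∈ S, Commute s t) : center G = ⊤ := by
  rw [eq_top_iff, ← hS, closure_le]
  exact fun s hs => mem_center_of_closure_eq_top hS fun t ht => hcomm t ht s hs

theorem Subgroup.commutator_le_center_of_closure_pair {a b : G} (hG : closure {a, b} = ⊤)
    (hc : a⁻¹ * b⁻¹ * a * b ∈ center G) : _root_.commutator G ≤ center G := by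
  let π := QuotientGroup.mk' (center G)
  have hab : Commute (π a) (π b) := by
    have hc' : π (a⁻¹ * b⁻¹ * a * b) = 1 := (QuotientGroup.eq_one_iff _).2 hc
    rw [← inv_mul_inv_mul_mul_eq_one_iff]
    simpa only [map_mul, map_inv] using hc'
  have hQ : closure {π a, π b} = ⊤ := by
    rw [← Set.image_pair, ← MonoidHom.map_closure, hG,
      map_top_of_surjective _ (QuotientGroup.mk'_surjective _)]
  have hcenter : center (G ⧸ center G) = ⊤ := by
    refine center_eq_top_of_closure_eq_top hQ ?_
    rintro s (rfl | rfl) t (rfl | rfl)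
    exacts [Commute.refl _, hab, hab.symm, Commute.refl _]
  rw [_root_.commutator_def, commutator_le, ← QuotientGroup.ker_mk' (center G)]
  intro g _ h _
  rw [MonoidHom.mem_ker, map_commutatorElement, commutatorElement_eq_one_iff_commute]
  exact mem_center_iff.1 (hcenter ▸ mem_top (π h)) (π g)

theorem Subgroup.top_lowerCentralSeries_two_eq_bot_of_commutator_le_center
    (h : _root_.commutator G ≤ center G) : (⊤ : Subgroup G).lowerCentralSeries 2 = ⊥ := by
  rw [eq_bot_iff]
  calc (⊤ : Subgroup G).lowerCentralSeries 2 = ⁅_root_.commutator G, ⊤⁆ := rfl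
    _ ≤ ⁅center G, ⊤⁆ := commutator_mono h le_rfl
    _ = ⊥ := commutator_center_left ⊤

end GroupTheory

theorem DihedralGroup.commute_conj_four (g h : DihedralGroup 4) : Commute g (h⁻¹ * g * h) := by
  have hEngel : ∀ g h : DihedralGroup 4, g * (h⁻¹ * g * h) = h⁻¹ * g * h * g := by decide
  exact hEngel g h

namespace RF

def mk (n : ℕ) : FreeGroup (Fin n) →* RF n := QuotientGroup.mk' _

variable {n : ℕ}

def of (i : Fin n) : RF n := mk n (FreeGroup.of i)

theorem mk_surjective : Function.Surjective (mk n) := QuotientGroup.mk'_surjective _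

theorem closure_range_of : closure (Set.range (of (n := n))) = ⊤ := by
  rw [show of = mk n ∘ FreeGroup.of from rfl, Set.range_comp, ← MonoidHom.map_closure,
    FreeGroup.closure_range_of, map_top_of_surjective _ mk_surjective]

theorem commute_of_conj (i : Fin n) (g : RF n) : Commute (of i) (g⁻¹ * of i * g) := by
  obtain ⟨w, rfl⟩ := mk_surjective g
  have hrel : mk n _ = 1 :=
    (QuotientGroup.eq_one_iff _).2 (subset_normalClosure (s := redRelators n) ⟨i, w, rfl⟩)
  rw [← inv_mul_inv_mul_mul_eq_one_iff]
  simpa only [map_mul, map_inv, of] using hrel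

def lift {H : Type*} [Group H] (f : Fin n → H)
    (hf : ∀ i (g : H), Commute (f i) (g⁻¹ * f i * g)) : RF n →* H :=
  QuotientGroup.lift _ (FreeGroup.lift f) <| normalClosure_le_normal <| by
    rintro _ ⟨i, w, rfl⟩
    simp only [SetLike.mem_coe, MonoidHom.mem_ker, map_mul, map_inv, FreeGroup.lift_apply_of,
      inv_mul_inv_mul_mul_eq_one_iff]
    exact hf i _

theorem lift_of {H : Type*} [Group H] (f : Fin n → H)
    (hf : ∀ i (g : H), Commute (f i) (g⁻¹ * f i * g)) (i : Fin n) : lift f hf (of i) = f i :=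
  FreeGroup.lift_apply_of

theorem closure_pair_eq_top : closure {of 0, of 1} = (⊤ : Subgroup (RF 2)) := by
  refine eq_top_iff.2 (closure_range_of.symm.trans_le (closure_mono ?_))
  rintro _ ⟨i, rfl⟩
  fin_cases i
  exacts [Or.inl rfl, Or.inr rfl]

theorem commutator_mem_center :
    (of 0)⁻¹ * (of 1)⁻¹ * of 0 * of 1 ∈ center (RF 2) := by
  refine mem_center_of_closure_eq_top closure_pair_eq_top ?_
  rintro s (rfl | rfl)
  · exact commute_inv_mul_inv_mul_mul_left (commute_of_conj 0 (of 1))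
  · exact commute_inv_mul_inv_mul_mul_right (commute_of_conj 1 (of 0))

theorem commutator_ne_one : ((of 0)⁻¹ * (of 1)⁻¹ * of 0 * of 1 : RF 2) ≠ 1 := by
  intro h
  have hD := congrArg (lift ![DihedralGroup.r 1, DihedralGroup.sr 0]
    fun _ => DihedralGroup.commute_conj_four _) h
  simp only [map_mul, map_inv, lift_of, map_one] at hD
  exact absurd hD (by decide)

end RF

/-- In RF_2, the image of [x_1,x_2] = x_1⁻¹x_2⁻¹x_1x_2 is central and nontrivial,
and all triple commutators vanish: RF_2 is nilpotent of class exactly 2. -/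
theorem RF_two_class_two :
    ((QuotientGroup.mk ((FreeGroup.of (0 : Fin 2))⁻¹ * (FreeGroup.of (1 : Fin 2))⁻¹ *
        FreeGroup.of (0 : Fin 2) * FreeGroup.of (1 : Fin 2)) : RF 2) ∈
      Subgroup.center (RF 2)) ∧
    ((QuotientGroup.mk ((FreeGroup.of (0 : Fin 2))⁻¹ * (FreeGroup.of (1 : Fin 2))⁻¹ *
        FreeGroup.of (0 : Fin 2) * FreeGroup.of (1 : Fin 2)) : RF 2) ≠ 1) ∧
    (⊤ : Subgroup (RF 2)).lowerCentralSeries 2 = ⊥ := by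
  have hc : (QuotientGroup.mk ((FreeGroup.of (0 : Fin 2))⁻¹ * (FreeGroup.of (1 : Fin 2))⁻¹ *
      FreeGroup.of (0 : Fin 2) * FreeGroup.of (1 : Fin 2)) : RF 2) =
      (RF.of 0)⁻¹ * (RF.of 1)⁻¹ * RF.of 0 * RF.of 1 := rfl
  rw [hc]
  exact ⟨RF.commutator_mem_center, RF.commutator_ne_one,
    top_lowerCentralSeries_two_eq_bot_of_commutator_le_center
      (commutator_le_center_of_closure_pair RF.closure_pair_eq_top RF.commutator_mem_center)⟩
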